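/- arXiv:1711.03826 — 2 statements merged into one kernel-verified Lean document; each statement's English description precedes it below -/
import Mathlib

section
/- Let S and Q be finite types, k ∈ ℕ, s : Fin k → S a fixed assignment of a state to each tuple position, and X : S → Q → ℕ. For q⃗ : Fin k → Q and (s', q') ∈ S × Q, let c_{s',q'}(q⃗) be the number of indices i ∈ Fin k with s(i) = s' and q⃗(i) = q'; let κ_{s'} be the number of indices i with s(i) = s'; and let X̄(s') = ∑_{q ∈ Q} X s' q. Then ∑_{q⃗ : Fin k → Q} ∏_{(s',q') ∈ S × Q} (X s' q')^{\underline{c_{s',q'}(q⃗)}} = ∏_{s' ∈ S} (X̄(s'))^{\underline{κ_{s'}}}. -/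
/-!
Induct on `k`, splitting off position `0`. Fixing its automaton state `q₀` contributes the factor
`X (s 0, q₀)` and leaves the same problem for `k` positions with the entry `X (s 0, q₀)` decreased
by one. That decrement lowers the row sum of `s 0` by one whatever `q₀` is, so the inductive
hypothesis gives a value independent of `q₀`, and summing the factors `X (s 0, q₀)` over `q₀`
yields the row sum itself, i.e. one more step of its falling factorial.
-/

open Finset Function

theorem Nat.descFactorial_succ_eq_mul_pred (n k : ℕ) :
    n.descFactorial (k + 1) = n * (n - 1).descFactorial k := by
  cases n with
  | zero => simp
  | succ n => exact Nat.succ_descFactorial_succ n k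

theorem Fin.sum_univ_pi_succ {M Q : Type*} [AddCommMonoid M] [Fintype Q] {k : ℕ}
    (F : (Fin (k + 1) → Q) → M) : ∑ v, F v = ∑ q, ∑ v : Fin k → Q, F (Fin.cons q v) := by
  rw [← (Fin.consEquiv fun _ => Q).sum_comp, Fintype.sum_prod_type]
  rfl

section
variable {α : Type*} [Fintype α] [DecidableEq α]

theorem Finset.sum_update_sub_one (g : α → ℕ) {a : α} (ha : g a ≠ 0) :
    ∑ x, update g a (g a - 1) x = (∑ x, g x) - 1 := by
  rw [sum_update_of_mem (mem_univ a), sum_eq_add_sum_sdiff_singleton_of_mem (mem_univ a)]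
  omega

theorem prod_descFactorial_ite_add (f c : α → ℕ) (a : α) :
    ∏ x, (f x).descFactorial (ite (a = x) 1 0 + c x) =
      f a * ∏ x, (update f a (f a - 1) x).descFactorial (c x) := by
  have pointwise : ∀ x, (f x).descFactorial (ite (a = x) 1 0 + c x) =
      ite (a = x) (f a) 1 * (update f a (f a - 1) x).descFactorial (c x) := by
    intro x
    rcases eq_or_ne a x with rfl | hax
    · rw [if_pos rfl, if_pos rfl, update_self, add_comm, Nat.descFactorial_succ_eq_mul_pred]
    · simp [hax, hax.symm]
  rw [prod_congr rfl fun x _ => pointwise x, prod_mul_distrib, prod_ite_eq]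
  simp
end

theorem sum_update_sub_one_row {S Q : Type*} [Fintype Q] [DecidableEq S] [DecidableEq Q]
    (X : S × Q → ℕ) {a : S × Q} (ha : X a ≠ 0) (s' : S) :
    ∑ q, update X a (X a - 1) (s', q) =
      update (fun s' => ∑ q, X (s', q)) a.1 ((∑ q, X (a.1, q)) - 1) s' := by
  change ∑ q, curry (update X a (X a - 1)) s' q = _
  rw [curry_update]
  refine (apply_update (fun _ g => ∑ q, g q) (curry X) a.1 _ s').trans ?_
  congr 1
  exact sum_update_sub_one (curry X a.1) ha

theorem sum_prod_descFactorial_card_filter {S Q : Type*} [Fintype S] [Fintype Q]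
    [DecidableEq S] [DecidableEq Q] (k : ℕ) (s : Fin k → S) (X : S × Q → ℕ) :
    ∑ qv : Fin k → Q, ∏ p : S × Q, (X p).descFactorial #{i | s i = p.1 ∧ qv i = p.2} =
      ∏ s' : S, (∑ q, X (s', q)).descFactorial #{i | s i = s'} := by
  induction k generalizing X with
  | zero => simp
  | succ k ih =>
    calc _ = ∑ q₀, ∑ qv : Fin k → Q, ∏ p : S × Q, (X p).descFactorial
              (ite ((s 0, q₀) = p) 1 0 + #{i : Fin k | s i.succ = p.1 ∧ qv i = p.2}) := by
          rw [Fin.sum_univ_pi_succ]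
          simp only [Fin.card_filter_univ_succ', Fin.cons_zero, Fin.cons_succ, Prod.ext_iff]
      _ = ∑ q₀, X (s 0, q₀) * ∏ s' : S,
              (∑ q, update X (s 0, q₀) (X (s 0, q₀) - 1) (s', q)).descFactorial
                #{i : Fin k | s i.succ = s'} := by
          simp only [prod_descFactorial_ite_add, ← mul_sum, ih]
      _ = ∑ q₀, X (s 0, q₀) * ∏ s' : S, (update (fun s' => ∑ q, X (s', q)) (s 0)
              ((∑ q, X (s 0, q)) - 1) s').descFactorial #{i : Fin k | s i.succ = s'} := by
          refine sum_congr rfl fun q₀ _ => ?_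
          -- when `X (s 0, q₀) = 0` the truncated decrement is no decrement, but the term vanishes
          rcases eq_or_ne (X (s 0, q₀)) 0 with h | h
          · simp [h]
          · simp only [sum_update_sub_one_row X h]
      _ = _ := by
          simp only [Fin.card_filter_univ_succ', prod_descFactorial_ite_add, sum_mul]

/-- Combinatorial identity behind Proposition 2: partitioning the ordered tuples of
distinct agents (one agent in state `s i` for each position `i`) according to the
vector `q⃗` of property-automaton states, and summing the counts over all `q⃗`,
recovers the total tuple count. -/
theorem sum_prod_descFactorial_pair_count {S Q : Type*}
    [Fintype S] [Fintype Q] [DecidableEq S] [DecidableEq Q]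
    (k : ℕ) (s : Fin k → S) (X : S → Q → ℕ) :
    ∑ qv : Fin k → Q, ∏ p : S × Q,
        (X p.1 p.2).descFactorial
          ((Finset.univ.filter (fun i => s i = p.1 ∧ qv i = p.2)).card) =
      ∏ s' : S, (∑ q : Q, X s' q).descFactorial
        ((Finset.univ.filter (fun i => s i = s')).card) :=
  sum_prod_descFactorial_card_filter k s (uncurry X)
end

section
/- Let S and Q be finite types, k ∈ ℕ, s : Fin k → S, and X : S → Q → ℕ. For q⃗ : Fin k → Q and (s', q') ∈ S × Q, let c_{s',q'}(q⃗) be the number of indices i ∈ Fin k with s(i) = s' and q⃗(i) = q'; let κ_{s'} be the number of indices i with s(i) = s'; and let X̄(s') = ∑_{q ∈ Q} X s' q. Assume κ_{s'} ≤ X̄(s') for every s' ∈ S. Then, in the rational numbers, ∑_{q⃗ : Fin k → Q} ( ∏_{(s',q')} (X s' q')^{\underline{c_{s',q'}(q⃗)}} ) / ( ∏_{s'} (X̄(s'))^{\underline{κ_{s'}}} ) = 1. -/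
/-!
The identity `∑_{g : ι → Q} ∏_q (x q)^{\underline{#g⁻¹(q)}} = (∑_q x q)^{\underline{#ι}}` is a
Vandermonde identity for falling factorials (both sides count injections of `ι` into a disjoint
union of blocks of sizes `x q`). It follows by induction on `#ι`: giving a new point the value `a`
multiplies a term by `x a - #g⁻¹(a)`, and summing over `a` gives the factor `∑_q x q - #ι`, since
the terms with some `#g⁻¹(q) > x q` vanish. Splitting `q⃗` along the fibres of `s` factors the
numerator of the theorem into one such identity per `s'`, each equal to a factor of the
denominator.
-/

open Finset

theorem prod_descFactorial_add_indicator {Q : Type*} [Fintype Q] [DecidableEq Q]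
    (x c : Q → ℕ) (a : Q) :
    ∏ q, (x q).descFactorial ((if a = q then 1 else 0) + c q)
      = (x a - c a) * ∏ q, (x q).descFactorial (c q) := by
  rw [← mul_prod_erase _ _ (mem_univ a), ← mul_prod_erase _ (fun q ↦ (x q).descFactorial (c q))
    (mem_univ a), if_pos rfl, add_comm, Nat.descFactorial_succ, mul_assoc]
  congr 2
  exact prod_congr rfl fun q hq ↦ by rw [if_neg (ne_of_mem_erase hq).symm, zero_add]

theorem sum_tsub_mul_prod_descFactorial {Q : Type*} [Fintype Q] (x c : Q → ℕ) :
    ∑ a, (x a - c a) * ∏ q, (x q).descFactorial (c q)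
      = (∑ q, x q - ∑ q, c q) * ∏ q, (x q).descFactorial (c q) := by
  rw [← sum_mul]
  by_cases hle : ∀ q, c q ≤ x q
  · rw [sum_tsub_distrib _ fun q _ ↦ hle q]
  · obtain ⟨q, hq⟩ := not_forall.1 hle
    rw [prod_eq_zero (mem_univ q) (Nat.descFactorial_eq_zero_iff_lt.2 (not_le.1 hq)),
      mul_zero, mul_zero]

theorem card_filter_cons_eq {Q : Type*} [DecidableEq Q] (a : Q) {n : ℕ} (g : Fin n → Q) (q : Q) :
    #{i | (Fin.cons a g : Fin (n + 1) → Q) i = q} = (if a = q then 1 else 0) + #{i | g i = q} := by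
  simp only [card_filter, Fin.sum_univ_succ, Fin.cons_zero, Fin.cons_succ]

theorem sum_prod_descFactorial_card_fiber_fin {Q : Type*} [Fintype Q] [DecidableEq Q]
    (x : Q → ℕ) (n : ℕ) :
    ∑ g : Fin n → Q, ∏ q, (x q).descFactorial #{i | g i = q} = (∑ q, x q).descFactorial n := by
  induction n with
  | zero => simp
  | succ n ih =>
    rw [← (Fin.consEquiv fun _ ↦ Q).sum_comp, Fintype.sum_prod_type, sum_comm]
    simp only [Fin.consEquiv_apply, card_filter_cons_eq, prod_descFactorial_add_indicator,
      sum_tsub_mul_prod_descFactorial, sum_card_fiberwise_eq_card_filter, mem_univ, filter_true,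
      card_univ, Fintype.card_fin, ← mul_sum, ih, Nat.descFactorial_succ]

theorem sum_prod_descFactorial_card_fiber {ι Q : Type*} [Fintype ι] [DecidableEq ι] [Fintype Q]
    [DecidableEq Q] (x : Q → ℕ) :
    ∑ g : ι → Q, ∏ q, (x q).descFactorial #{i | g i = q}
      = (∑ q, x q).descFactorial (Fintype.card ι) := by
  rw [← sum_prod_descFactorial_card_fiber_fin x]
  let e := Fintype.equivFin ι
  refine Fintype.sum_equiv (e.arrowCongr (Equiv.refl Q)) _ _ fun g ↦ prod_congr rfl fun q _ ↦ ?_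
  congr 1
  exact card_equiv e (by simp [Equiv.arrowCongr])

def piFiberEquiv {ι S : Type*} (s : ι → S) (Q : Type*) :
    (∀ a : S, {i // s i = a} → Q) ≃ (ι → Q) :=
  (Equiv.piCurry fun _ _ ↦ Q).symm.trans ((Equiv.sigmaFiberEquiv s).arrowCongr (Equiv.refl Q))

theorem card_filter_piFiberEquiv {ι S Q : Type*} [Fintype ι] [DecidableEq S] [DecidableEq Q]
    (s : ι → S) (G : ∀ a : S, {i // s i = a} → Q) (a : S) (q : Q) :
    #{i | s i = a ∧ piFiberEquiv s Q G i = q} = #{j | G a j = q} := by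
  refine (card_bij (fun j _ ↦ j.1) ?_ (fun _ _ _ _ ↦ Subtype.ext) ?_).symm
  all_goals simp only [mem_filter, mem_univ, true_and]
  · rintro ⟨i, rfl⟩ hi
    exact ⟨rfl, hi⟩
  · rintro i ⟨rfl, hi⟩
    exact ⟨⟨i, rfl⟩, hi, rfl⟩

theorem sum_prod_descFactorial_card_filter_and {ι S Q : Type*} [Fintype ι] [DecidableEq ι]
    [Fintype S] [DecidableEq S] [Fintype Q] [DecidableEq Q] (s : ι → S) (X : S → Q → ℕ) :
    ∑ g : ι → Q, ∏ p : S × Q, (X p.1 p.2).descFactorial #{i | s i = p.1 ∧ g i = p.2}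
      = ∏ a, (∑ q, X a q).descFactorial #{i | s i = a} := by
  rw [← (piFiberEquiv s Q).sum_comp]
  simp only [Fintype.prod_prod_type, card_filter_piFiberEquiv]
  rw [← Fintype.prod_sum (fun a (g : {i // s i = a} → Q) ↦
    ∏ q, (X a q).descFactorial #{j | g j = q})]
  simp only [sum_prod_descFactorial_card_fiber, Fintype.card_subtype]

/-- Proposition 2 of the paper: the fractions of the global rate assigned to the
synchronized transitions, indexed by the vectors `q⃗ : Fin k → Q`, sum to one,
provided each multiplicity `κ_{s'}` does not exceed the aggregated count `X̄(s')`. -/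
theorem sum_rate_fractions_eq_one {S Q : Type*}
    [Fintype S] [Fintype Q] [DecidableEq S] [DecidableEq Q]
    (k : ℕ) (s : Fin k → S) (X : S → Q → ℕ)
    (hκ : ∀ s' : S, (Finset.univ.filter (fun i => s i = s')).card ≤ ∑ q : Q, X s' q) :
    ∑ qv : Fin k → Q,
        ((∏ p : S × Q, ((X p.1 p.2).descFactorial
            ((Finset.univ.filter (fun i => s i = p.1 ∧ qv i = p.2)).card) : ℚ)) /
          (∏ s' : S, ((∑ q : Q, X s' q).descFactorial
            ((Finset.univ.filter (fun i => s i = s')).card) : ℚ))) = 1 := by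
  have hden : (∏ s' : S, ((∑ q : Q, X s' q).descFactorial #{i | s i = s'} : ℚ)) ≠ 0 :=
    prod_ne_zero_iff.2 fun s' _ ↦
      Nat.cast_ne_zero.2 (Nat.descFactorial_eq_zero_iff_lt.not.2 (hκ s').not_gt)
  rw [← sum_div, div_eq_one_iff_eq hden]
  exact_mod_cast sum_prod_descFactorial_card_filter_and s X
end
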